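/- Lyapunov-Krasovskii sufficient condition (delay-independent): suppose there exist symmetric positive definite matrices P, Q ∈ ℝ^{n×n} such that the block matrix [[AᵀP + PA + Q, PM], [MᵀP, −Q]] is negative definite. Then V(x_t) = x(t)ᵀ P x(t) + ∫_{t−h}^{t} x(s)ᵀ Q x(s) ds satisfies dV/dt ≤ −ε‖(x(t), x(t−h))‖² along solutions of ẋ(t) = A x(t) + M x(t−h) for some ε > 0. -/

import Mathlib

/-!
Along a solution, the derivative of the Lyapunov–Krasovskii functional at `t > 0` is the quadratic
form of the block matrix at `ξ = (x(t), x(t - h))`: the `P`-part is differentiated with the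
equation `ẋ(t) = A x(t) + M x(t - h)`, and the fundamental theorem of calculus turns the sliding
window integral into `x(t)ᵀ Q x(t) - x(t - h)ᵀ Q x(t - h)`. A negative definite matrix on a
finite-dimensional space is uniformly negative definite (minimise the form over the compact unit
sphere), which yields `ε`.
-/

open Filter Topology Set

noncomputable section

abbrev Vec (n : ℕ) := EuclideanSpace ℝ (Fin n)

abbrev Seg (n : ℕ) (h : ℝ) := C(Set.Icc (-h) (0:ℝ), Vec n)

/-- Action of a matrix on a Euclidean vector. -/
def mapp {n : ℕ} (A : Matrix (Fin n) (Fin n) ℝ) (v : Vec n) : Vec n :=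
  Matrix.toEuclideanCLM (𝕜 := ℝ) A v

/-- `x` is a solution of the delay system `ẋ(t) = A x(t) + M x(t-h)` with
initial segment `φ` on `[-h, 0]`. -/
def IsSol {n : ℕ} (A M : Matrix (Fin n) (Fin n) ℝ) (h : ℝ)
    (φ : Seg n h) (x : ℝ → Vec n) : Prop :=
  ContinuousOn x (Set.Ici (-h)) ∧
  (∀ θ : Set.Icc (-h) (0:ℝ), x θ = φ θ) ∧
  ∀ t > 0, HasDerivAt x (mapp A (x t) + mapp M (x (t - h))) t

/-- `ℓ_t`: sup of `‖x(t)‖` over solutions with unit-norm initial segment. -/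
def ell {n : ℕ} (A M : Matrix (Fin n) (Fin n) ℝ) (h : ℝ) (t : ℝ) : ℝ :=
  sSup {r | ∃ (φ : Seg n h) (x : ℝ → Vec n), ‖φ‖ = 1 ∧ IsSol A M h φ x ∧ r = ‖x t‖}

open Matrix

open scoped RealInnerProductSpace in
theorem ContinuousLinearMap.exists_pos_mul_norm_sq_le_inner_apply {E : Type*}
    [NormedAddCommGroup E] [InnerProductSpace ℝ E] [FiniteDimensional ℝ E] (T : E →L[ℝ] E)
    (hT : ∀ v, v ≠ 0 → 0 < ⟪v, T v⟫) : ∃ ε > 0, ∀ v, ε * ‖v‖ ^ 2 ≤ ⟪v, T v⟫ := by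
  have hscale (c : ℝ) (v : E) : ⟪c • v, T (c • v)⟫ = c ^ 2 * ⟪v, T v⟫ := by
    rw [map_smul, real_inner_smul_left, real_inner_smul_right]; ring
  rcases subsingleton_or_nontrivial E with hE | hE
  · exact ⟨1, one_pos, fun v => by simp [Subsingleton.elim v 0]⟩
  obtain ⟨v₀, hv₀, hmin⟩ := (isCompact_sphere (0 : E) 1).exists_isMinOn
    (NormedSpace.sphere_nonempty.mpr zero_le_one)
    (continuous_id.inner (𝕜 := ℝ) T.continuous).continuousOn
  refine ⟨⟪v₀, T v₀⟫, hT v₀ (ne_zero_of_mem_unit_sphere ⟨v₀, hv₀⟩), fun v => ?_⟩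
  rcases eq_or_ne v 0 with rfl | hv
  · simp
  have hunit : ‖v‖⁻¹ • v ∈ Metric.sphere (0 : E) 1 := by simp [norm_smul, hv]
  calc ⟪v₀, T v₀⟫ * ‖v‖ ^ 2 ≤ ⟪‖v‖⁻¹ • v, T (‖v‖⁻¹ • v)⟫ * ‖v‖ ^ 2 := by
        gcongr; exact hmin hunit
    _ = ⟪v, T v⟫ := by rw [hscale]; field_simp

theorem Matrix.PosDef.exists_pos_mul_dotProduct_self_le {ι : Type*} [Fintype ι] [DecidableEq ι]
    {N : Matrix ι ι ℝ} (hN : N.PosDef) : ∃ ε > 0, ∀ ξ : ι → ℝ, ε * (ξ ⬝ᵥ ξ) ≤ ξ ⬝ᵥ N *ᵥ ξ := by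
  obtain ⟨ε, hε, hle⟩ := (toEuclideanCLM (𝕜 := ℝ) N).exists_pos_mul_norm_sq_le_inner_apply
    fun v hv => by
      rw [inner_toEuclideanCLM]
      exact hN.dotProduct_mulVec_pos (by simpa using hv)
  refine ⟨ε, hε, fun ξ => ?_⟩
  have := hle (WithLp.toLp 2 ξ)
  rwa [inner_toEuclideanCLM, ← real_inner_self_eq_norm_sq,
    EuclideanSpace.inner_eq_star_dotProduct] at this

theorem hasDerivAt_intervalIntegral_sub_const_self {E : Type*} [NormedAddCommGroup E]
    [NormedSpace ℝ E] [CompleteSpace E] {f : ℝ → E} {s : Set ℝ} {h t : ℝ}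
    (hs : IsOpen s) (hf : ContinuousOn f s) (hst : uIcc (t - h) t ⊆ s) :
    HasDerivAt (fun u => ∫ r in (u - h)..u, f r) (f t - f (t - h)) t := by
  have hmem : ∀ r ∈ uIcc (t - h) t, s ∈ 𝓝 r := fun r hr => hs.mem_nhds (hst hr)
  have hF := intervalIntegral.integral_hasFDerivAt ((hf.mono hst).intervalIntegrable)
    (hf.stronglyMeasurableAtFilter hs _ (hst left_mem_uIcc))
    (hf.stronglyMeasurableAtFilter hs _ (hst right_mem_uIcc))
    (hf.continuousAt (hmem _ left_mem_uIcc)) (hf.continuousAt (hmem _ right_mem_uIcc))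
  have hpath : HasDerivAt (fun u : ℝ => (u - h, u)) (1, 1) t :=
    ((hasDerivAt_id t).sub_const h).prodMk (hasDerivAt_id t)
  simpa [Function.comp_def] using hF.comp_hasDerivAt (f := fun u : ℝ => (u - h, u)) t hpath

theorem sumElim_dotProduct_fromBlocks_krasovskii_mulVec_sumElim {R ι : Type*} [CommRing R]
    [Fintype ι] (A M P Q : Matrix ι ι R) (a b : ι → R) :
    Sum.elim a b ⬝ᵥ fromBlocks (Aᵀ * P + P * A + Q) (P * M) (Mᵀ * P) (-Q) *ᵥ Sum.elim a b =
      a ⬝ᵥ P *ᵥ (A *ᵥ a + M *ᵥ b) + (A *ᵥ a + M *ᵥ b) ⬝ᵥ P *ᵥ a +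
        (a ⬝ᵥ Q *ᵥ a - b ⬝ᵥ Q *ᵥ b) := by
  simp only [fromBlocks_mulVec, sumElim_dotProduct_sumElim, Sum.elim_comp_inl, Sum.elim_comp_inr,
    add_mulVec, mulVec_add, dotProduct_add, add_dotProduct, neg_mulVec, dotProduct_neg,
    ← mulVec_mulVec, dotProduct_mulVec _ Aᵀ, dotProduct_mulVec _ Mᵀ, vecMul_transpose]
  ring

section

variable {n : ℕ}

def krasovskiiFunctional (P Q : Matrix (Fin n) (Fin n) ℝ) (h : ℝ) (x : ℝ → Vec n) (u : ℝ) : ℝ :=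
  inner (𝕜 := ℝ) (x u) (mapp P (x u)) + ∫ s in (u - h)..u, inner (𝕜 := ℝ) (x s) (mapp Q (x s))

theorem IsSol.hasDerivAt_krasovskiiFunctional {A M : Matrix (Fin n) (Fin n) ℝ} {h : ℝ}
    {φ : Seg n h} {x : ℝ → Vec n} (hx : IsSol A M h φ x) (P Q : Matrix (Fin n) (Fin n) ℝ)
    (hh : 0 < h) {t : ℝ} (ht : 0 < t) :
    HasDerivAt (krasovskiiFunctional P Q h x)
      (Sum.elim (x t).ofLp (x (t - h)).ofLp ⬝ᵥ
        fromBlocks (Aᵀ * P + P * A + Q) (P * M) (Mᵀ * P) (-Q) *ᵥ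
        Sum.elim (x t).ofLp (x (t - h)).ofLp) t := by
  obtain ⟨hcont, -, hder⟩ := hx
  have hquad := (hder t ht).inner ℝ
    ((toEuclideanCLM (𝕜 := ℝ) P).hasFDerivAt.comp_hasDerivAt t (hder t ht))
  have hcontQ : ContinuousOn (fun s => inner (𝕜 := ℝ) (x s) (mapp Q (x s))) (Ioi (-h)) :=
    have hx' := hcont.mono Ioi_subset_Ici_self
    hx'.inner ((toEuclideanCLM (𝕜 := ℝ) Q).continuous.comp_continuousOn hx')
  have hwindow : uIcc (t - h) t ⊆ Ioi (-h) := by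
    rw [uIcc_of_le (by linarith), Icc_subset_Ioi_iff (by linarith)]
    linarith
  have hwindowDeriv := hasDerivAt_intervalIntegral_sub_const_self isOpen_Ioi hcontQ hwindow
  refine (hquad.add hwindowDeriv).congr_deriv ?_
  rw [sumElim_dotProduct_fromBlocks_krasovskii_mulVec_sumElim]
  simp only [Function.comp_apply, mapp, inner_toEuclideanCLM, WithLp.ofLp_add,
    ofLp_toEuclideanCLM]

end

theorem stmt15_general (n : ℕ) (h : ℝ) (hh : 0 < h)
    (A M P Q : Matrix (Fin n) (Fin n) ℝ)
    (hblock : (-(Matrix.fromBlocks (A.transpose * P + P * A + Q) (P * M)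
      (M.transpose * P) (-Q))).PosDef) :
    ∃ ε > (0:ℝ), ∀ (φ : Seg n h) (x : ℝ → Vec n), IsSol A M h φ x →
      ∀ t > (0:ℝ), ∀ d : ℝ,
        HasDerivAt (fun u => inner (𝕜 := ℝ) (x u) (mapp P (x u)) +
          ∫ s in (u - h)..u, inner (𝕜 := ℝ) (x s) (mapp Q (x s))) d t →
        d ≤ -ε * (‖x t‖ ^ 2 + ‖x (t - h)‖ ^ 2) := by
  obtain ⟨ε, hε, hcoercive⟩ := hblock.exists_pos_mul_dotProduct_self_le
  refine ⟨ε, hε, fun φ x hx t ht d hd => ?_⟩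
  have hξ := hcoercive (Sum.elim (x t).ofLp (x (t - h)).ofLp)
  rw [neg_mulVec, dotProduct_neg, ← hd.unique (hx.hasDerivAt_krasovskiiFunctional P Q hh ht),
    sumElim_dotProduct_sumElim] at hξ
  have hnorm (v : Vec n) : v.ofLp ⬝ᵥ v.ofLp = ‖v‖ ^ 2 := by
    rw [← real_inner_self_eq_norm_sq, EuclideanSpace.inner_eq_star_dotProduct, star_trivial]
  rw [hnorm, hnorm] at hξ
  linarith

/-- Lyapunov–Krasovskii sufficient condition (delay-independent): if the block
matrix `[[AᵀP + PA + Q, PM], [MᵀP, −Q]]` is negative definite, then the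
Lyapunov–Krasovskii functional decreases at rate `−ε‖(x(t), x(t−h))‖²`. -/
theorem stmt15 (n : ℕ) (h : ℝ) (hh : 0 < h)
    (A M P Q : Matrix (Fin n) (Fin n) ℝ)
    (hP : P.PosDef) (hQ : Q.PosDef)
    (hblock : (-(Matrix.fromBlocks (A.transpose * P + P * A + Q) (P * M)
      (M.transpose * P) (-Q))).PosDef) :
    ∃ ε > (0:ℝ), ∀ (φ : Seg n h) (x : ℝ → Vec n), IsSol A M h φ x →
      ∀ t > (0:ℝ), ∀ d : ℝ,
        HasDerivAt (fun u => inner (𝕜 := ℝ) (x u) (mapp P (x u)) +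
          ∫ s in (u - h)..u, inner (𝕜 := ℝ) (x s) (mapp Q (x s))) d t →
        d ≤ -ε * (‖x t‖ ^ 2 + ‖x (t - h)‖ ^ 2) :=
  stmt15_general n h hh A M P Q hblock
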